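/- Let f : ℝ → ℝ be continuous and suppose lip f(x) < ∞ for every x ∈ ℝ (i.e., l_f^∞ = ∅). Then the set L_f^∞ = {x ∈ ℝ : Lip f(x) = ∞} is a G_δ set and is trim. -/

import Mathlib

/-!
`{Lip f = ∞}` is the intersection over `K, n ∈ ℕ` of the open sets of points `x` having some `y`
with `|x - y| < 1/(n+1)` and `K |x - y| < |f x - f y|`.

For trimness, suppose `{Lip f = ∞}` has full measure in a nonempty open set `U`. Since `lip f` is
finite, every point has arbitrarily small scales at which `f` is Lipschitz, so by the Vitali
covering lemma `f` maps null sets to null sets; hence every subset of `U` with non-null image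
contains a point where `Lip f = ∞`. Near such a point `z` there is `y` with `t = |z - y|` small
and `|f z - f y| > (70 m + 1) t`, while (Vitali again) the points of `closedBall z t` outside
`steepSet f m (6 t)` have image of measure `≤ 5 m · 14 t`. So the points of the ball in
`steepSet f m (6 t)` have non-null image and include a new point with `Lip f = ∞`. Iterating
with `m = 0, 1, 2, …` and radii at least halving, the centres converge to a point `x` with
`M_f(x, s) ≥ m / 3` for all small `s`, for every `m`: there `lip f = ∞`, a contradiction.
-/

open Set Filter MeasureTheory Topology
open scoped ENNReal NNReal

/-- `M_f(x,r) = sup { |f(x)-f(y)|/r : |x-y| ≤ r }`, valued in `[0,∞]`. -/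
noncomputable def Mf (f : ℝ → ℝ) (x r : ℝ) : ℝ≥0∞ :=
  ⨆ y ∈ {y : ℝ | |x - y| ≤ r}, ENNReal.ofReal (|f x - f y| / r)

/-- The big Lip function: `Lip f(x) = limsup_{r→0⁺} M_f(x,r)`. -/
noncomputable def bigLip (f : ℝ → ℝ) (x : ℝ) : ℝ≥0∞ :=
  Filter.limsup (fun r => Mf f x r) (𝓝[>] (0 : ℝ))

/-- The little lip function: `lip f(x) = liminf_{r→0⁺} M_f(x,r)`. -/
noncomputable def litLip (f : ℝ → ℝ) (x : ℝ) : ℝ≥0∞ :=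
  Filter.liminf (fun r => Mf f x r) (𝓝[>] (0 : ℝ))

/-- A set `E ⊆ ℝ` is trim if `λ(E ∩ (a,b)) < b - a` for every open interval `(a,b)`. -/
def Trim (E : Set ℝ) : Prop :=
  ∀ a b : ℝ, a < b → volume (E ∩ Ioo a b) < ENNReal.ofReal (b - a)

open Metric

section Slope

variable {f : ℝ → ℝ} {x y r c : ℝ}

theorem ofReal_div_le_Mf (hy : |x - y| ≤ r) : ENNReal.ofReal (|f x - f y| / r) ≤ Mf f x r :=
  le_iSup₂ (f := fun y (_ : |x - y| ≤ r) => ENNReal.ofReal (|f x - f y| / r)) y hy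

theorem ofReal_le_Mf (hr : 0 < r) (hy : |x - y| ≤ r) (h : c * r ≤ |f x - f y|) :
    ENNReal.ofReal c ≤ Mf f x r :=
  (ENNReal.ofReal_le_ofReal ((le_div_iff₀ hr).2 h)).trans (ofReal_div_le_Mf hy)

theorem abs_sub_le_of_Mf_le (hr : 0 < r) (hc : 0 ≤ c) (h : Mf f x r ≤ ENNReal.ofReal c)
    (hy : |x - y| ≤ r) : |f x - f y| ≤ c * r :=
  (div_le_iff₀ hr).1 ((ENNReal.ofReal_le_ofReal_iff hc).1 ((ofReal_div_le_Mf hy).trans h))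

theorem exists_lt_abs_sub_of_lt_Mf (hr : 0 < r) (h : ENNReal.ofReal c < Mf f x r) :
    ∃ y, |x - y| ≤ r ∧ c * r < |f x - f y| := by
  obtain ⟨y, hlt⟩ := lt_iSup_iff.1 h
  obtain ⟨hy, hlt⟩ := lt_iSup_iff.1 hlt
  exact ⟨y, hy, (lt_div_iff₀ hr).1 ((ENNReal.ofReal_lt_ofReal_iff'.1 hlt).1)⟩

theorem exists_lt_abs_sub_of_bigLip_eq_top (hx : bigLip f x = ⊤) (hc : 0 ≤ c) {ε : ℝ}
    (hε : 0 < ε) : ∃ y, |x - y| < ε ∧ c * |x - y| < |f x - f y| := by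
  have hfreq : ∃ᶠ r in 𝓝[>] (0 : ℝ), ENNReal.ofReal c < Mf f x r :=
    frequently_lt_of_lt_limsup (by isBoundedDefault)
      (by rw [← bigLip, hx]; exact ENNReal.ofReal_lt_top)
  obtain ⟨r, ⟨hr, hrε⟩, hlt⟩ := ((nhdsGT_basis 0).frequently_iff.1 hfreq) ε hε
  obtain ⟨y, hy, hcy⟩ := exists_lt_abs_sub_of_lt_Mf hr hlt
  exact ⟨y, hy.trans_lt hrε, (mul_le_mul_of_nonneg_left hy hc).trans_lt hcy⟩

theorem bigLip_eq_top_iff :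
    bigLip f x = ⊤ ↔ ∀ K n : ℕ, ∃ y, |x - y| < 1 / (n + 1) ∧ K * |x - y| < |f x - f y| := by
  refine ⟨fun hx K n => exists_lt_abs_sub_of_bigLip_eq_top hx K.cast_nonneg (by positivity),
    fun h => ENNReal.eq_top_of_forall_nnreal_le fun K => ?_⟩
  refine le_limsup_of_frequently_le' ((nhdsGT_basis 0).frequently_iff.2 fun ε hε => ?_)
  obtain ⟨n, hn⟩ := exists_nat_one_div_lt hε
  obtain ⟨y, hyn, hKy⟩ := h ⌈(K : ℝ)⌉₊ n
  have hxy : 0 < |x - y| := by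
    rcases eq_or_ne x y with rfl | hne
    · simp at hKy
    · exact abs_pos.2 (sub_ne_zero.2 hne)
  refine ⟨|x - y|, ⟨hxy, hyn.trans hn⟩, ?_⟩
  calc (K : ℝ≥0∞) = ENNReal.ofReal K := (ENNReal.ofReal_coe_nnreal).symm
    _ ≤ Mf f x |x - y| := ofReal_le_Mf hxy le_rfl
        ((mul_le_mul_of_nonneg_right (Nat.le_ceil _) hxy.le).trans hKy.le)

end Slope

theorem isGδ_setOf_bigLip_eq_top {f : ℝ → ℝ} (hf : Continuous f) :
    IsGδ {x | bigLip f x = ⊤} := by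
  have : {x | bigLip f x = ⊤} = ⋂ (K : ℕ) (n : ℕ), ⋃ y : ℝ,
      {x | |x - y| < 1 / ((n : ℝ) + 1) ∧ K * |x - y| < |f x - f y|} := by
    ext x
    simp only [mem_ofPred_eq, mem_iInter, mem_iUnion, bigLip_eq_top_iff]
  rw [this]
  refine .iInter fun K => .iInter fun n => (isOpen_iUnion fun y => ?_).isGδ
  have hd : Continuous fun x : ℝ => |x - y| := by fun_prop
  exact (isOpen_lt hd continuous_const).inter
    (isOpen_lt (continuous_const.mul hd) (by fun_prop))

theorem volume_image_le_of_Mf_le {f : ℝ → ℝ} {c R : ℝ} {E U : Set ℝ} (hc : 0 ≤ c)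
    (h : ∀ z ∈ E, ∃ s ∈ Ioc 0 R, closedBall z s ⊆ U ∧ Mf f z s ≤ ENNReal.ofReal c) :
    volume (f '' E) ≤ ENNReal.ofReal (5 * c) * volume U := by
  have h' : ∀ z : E, ∃ s ∈ Ioc 0 R, closedBall (z : ℝ) s ⊆ U ∧ Mf f z s ≤ ENNReal.ofReal c :=
    fun z => h z z.2
  choose s hs hsU hflat using h'
  obtain ⟨u, -, hdisj, hcover⟩ :=
    Vitali.exists_disjoint_subfamily_covering_enlargement_closedBall (univ : Set E)
      (fun z => (z : ℝ)) (fun z => s z / 5) R (fun z _ => by linarith [(hs z).1, (hs z).2]) 5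
      (by norm_num)
  have hu : u.Countable := hdisj.countable_of_nonempty_interior fun z _ =>
    (nonempty_ball.2 (by linarith [(hs z).1])).mono ball_subset_interior_closedBall
  have himage : f '' E ⊆ ⋃ b ∈ u, closedBall (f b) (c * s b) := by
    rintro - ⟨z, hz, rfl⟩
    obtain ⟨b, hb, hzb⟩ := hcover ⟨z, hz⟩ (mem_univ _)
    have hzb : |(b : ℝ) - z| ≤ s b := by
      have := hzb (mem_closedBall_self (by linarith [(hs ⟨z, hz⟩).1]))
      rw [mem_closedBall, Real.dist_eq, abs_sub_comm] at this
      linarith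
    refine mem_biUnion hb ?_
    rw [mem_closedBall, Real.dist_eq, abs_sub_comm]
    exact abs_sub_le_of_Mf_le (hs b).1 hc (hflat b) hzb
  calc volume (f '' E) ≤ ∑' b : u, volume (closedBall (f b) (c * s b)) :=
        (measure_mono himage).trans (measure_biUnion_le _ hu _)
    _ = ∑' b : u, ENNReal.ofReal (5 * c) * volume (closedBall (b : ℝ) (s b / 5)) := by
        refine tsum_congr fun b => ?_
        rw [Real.volume_closedBall, Real.volume_closedBall, ← ENNReal.ofReal_mul (by positivity)]
        ring_nf
    _ = ENNReal.ofReal (5 * c) * volume (⋃ b ∈ u, closedBall (b : ℝ) (s b / 5)) := by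
        rw [ENNReal.tsum_mul_left, measure_biUnion hu hdisj fun _ _ => measurableSet_closedBall]
    _ ≤ ENNReal.ofReal (5 * c) * volume U := by
        refine mul_le_mul_right (measure_mono (iUnion₂_subset fun b _ => ?_)) _
        exact (closedBall_subset_closedBall (by linarith [(hs b).1])).trans (hsU b)

theorem volume_image_eq_zero_of_litLip_ne_top {f : ℝ → ℝ} {A : Set ℝ}
    (hlip : ∀ x ∈ A, litLip f x ≠ ⊤) (hA : volume A = 0) : volume (f '' A) = 0 := by
  have hcover : A ⊆ ⋃ m : ℕ, {x ∈ A | litLip f x < m} := fun x hx =>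
    mem_iUnion.2 ((ENNReal.exists_nat_gt (hlip x hx)).imp fun _ hm => ⟨hx, hm⟩)
  refine measure_mono_null ((image_mono hcover).trans image_iUnion.subset)
    (measure_iUnion_null fun m => ?_)
  set B := {x ∈ A | litLip f x < m}
  have hB : volume B = 0 := measure_mono_null (sep_subset _ _) hA
  have hle : ∀ ε : ℝ≥0∞, ε ≠ 0 → volume (f '' B) ≤ ENNReal.ofReal (5 * m) * ε := by
    intro ε hε
    obtain ⟨U, hBU, hU, hUε⟩ := B.exists_isOpen_le_add volume hε
    rw [hB, zero_add] at hUε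
    refine (volume_image_le_of_Mf_le (R := 1) m.cast_nonneg fun z hz => ?_).trans (by gcongr)
    obtain ⟨ρ, hρ, hρU⟩ := nhds_basis_closedBall.mem_iff.1 (hU.mem_nhds (hBU hz))
    obtain ⟨s, ⟨hs, hsρ⟩, hsm⟩ := (nhdsGT_basis 0).frequently_iff.1
      (frequently_lt_of_liminf_lt (by isBoundedDefault) hz.2) (min ρ 1) (by positivity)
    refine ⟨s, ⟨hs, hsρ.le.trans (min_le_right _ _)⟩,
      (closedBall_subset_closedBall (hsρ.le.trans (min_le_left _ _))).trans hρU, ?_⟩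
    rw [ENNReal.ofReal_natCast]
    exact hsm.le
  have hlim := ENNReal.Tendsto.const_mul ENNReal.tendsto_inv_nat_nhds_zero
    (Or.inr (ENNReal.ofReal_ne_top (r := 5 * m)))
  rw [mul_zero] at hlim
  exact nonpos_iff_eq_zero.1 (ge_of_tendsto' hlim fun n =>
    hle _ (ENNReal.inv_ne_zero.2 (ENNReal.natCast_ne_top n)))

def steepSet (f : ℝ → ℝ) (c σ : ℝ) : Set ℝ :=
  {x | ∀ s ∈ Ioc 0 σ, ENNReal.ofReal c < Mf f x s}

theorem ofReal_div_three_le_Mf_of_mem_steepSet {f : ℝ → ℝ} {c σ s x z : ℝ} (hc : 0 ≤ c)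
    (hz : z ∈ steepSet f c σ) (hs : 0 < s) (hsσ : s ≤ σ) (hxz : 3 * |x - z| ≤ s) :
    ENNReal.ofReal (c / 3) ≤ Mf f x s := by
  have hd := abs_nonneg (x - z)
  obtain ⟨y, hzy, hy⟩ := exists_lt_abs_sub_of_lt_Mf (by linarith)
    (hz (s - |x - z|) ⟨by linarith, by linarith⟩)
  rcases le_or_gt (c / 3 * s) |f x - f z| with hxz' | hxz'
  · exact ofReal_le_Mf hs (by linarith) hxz'
  · refine ofReal_le_Mf hs ((abs_sub_le x z y).trans (by linarith)) ?_
    have := abs_sub_le (f z) (f x) (f y)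
    rw [abs_sub_comm (f z) (f x)] at this
    nlinarith [mul_le_mul_of_nonneg_left hxz hc]

theorem ofReal_abs_sub_le_volume_image {f : ℝ → ℝ} (hf : Continuous f) (x y : ℝ) :
    ENNReal.ofReal |f x - f y| ≤ volume (f '' closedBall x |x - y|) := by
  have hsub : uIcc x y ⊆ closedBall x |x - y| :=
    (convex_closedBall x _).isPreconnected.ordConnected.uIcc_subset
      (mem_closedBall_self (abs_nonneg _)) (by rw [mem_closedBall, Real.dist_eq, abs_sub_comm])
  calc ENNReal.ofReal |f x - f y| = volume (uIcc (f x) (f y)) := by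
        rw [Real.volume_interval, abs_sub_comm]
    _ ≤ volume (f '' uIcc x y) := measure_mono (intermediate_value_uIcc hf.continuousOn)
    _ ≤ volume (f '' closedBall x |x - y|) := measure_mono (image_mono hsub)

theorem exists_volume_image_inter_steepSet_ne_zero {f : ℝ → ℝ} (hf : Continuous f) {z : ℝ}
    (hz : bigLip f z = ⊤) (m : ℕ) {ε : ℝ} (hε : 0 < ε) :
    ∃ t ∈ Ioc 0 ε, volume (f '' (closedBall z t ∩ steepSet f m (6 * t))) ≠ 0 := by
  obtain ⟨y, hyε, hy⟩ :=
    exists_lt_abs_sub_of_bigLip_eq_top hz (c := 70 * m + 1) (by positivity) hε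
  have ht : 0 < |z - y| := abs_pos.2 (sub_ne_zero.2 fun h => by simp [h] at hy)
  set t := |z - y|
  refine ⟨t, ⟨ht, hyε.le⟩, fun hnull => ?_⟩
  set S := steepSet f m (6 * t)
  have hflat : volume (f '' (closedBall z t \ S)) ≤
      ENNReal.ofReal (5 * m) * volume (closedBall z (7 * t)) := by
    refine volume_image_le_of_Mf_le (R := 6 * t) m.cast_nonneg fun x hx => ?_
    obtain ⟨s, hs, hs6, hsm⟩ : ∃ s, 0 < s ∧ s ≤ 6 * t ∧ Mf f x s ≤ m := by
      simpa [S, steepSet] using hx.2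
    refine ⟨s, ⟨hs, hs6⟩, closedBall_subset_closedBall' ?_, by rwa [ENNReal.ofReal_natCast]⟩
    linarith [mem_closedBall.1 hx.1]
  have hsplit : volume (f '' closedBall z t) ≤ volume (f '' (closedBall z t \ S)) :=
    calc volume (f '' closedBall z t)
        ≤ volume (f '' (closedBall z t \ S)) + volume (f '' (closedBall z t ∩ S)) :=
          (measure_mono (by rw [← image_union, sdiff_union_inter])).trans (measure_union_le _ _)
      _ = volume (f '' (closedBall z t \ S)) := by rw [hnull, add_zero]
  have key := ((ofReal_abs_sub_le_volume_image hf z y).trans hsplit).trans hflat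
  rw [Real.volume_closedBall, ← ENNReal.ofReal_mul (by positivity),
    ENNReal.ofReal_le_ofReal_iff (by positivity)] at key
  linarith

theorem exists_forall_dist_le_two_mul {X : Type*} [PseudoMetricSpace X] [ProperSpace X]
    {z : ℕ → X} {t : ℕ → ℝ} (ht : ∀ n, t (n + 1) ≤ t n / 2)
    (hz : ∀ n, dist (z (n + 1)) (z n) ≤ t n) : ∃ x, ∀ n, dist x (z n) ≤ 2 * t n := by
  obtain ⟨x, hx⟩ := IsCompact.nonempty_iInter_of_sequence_nonempty_isCompact_isClosed
    (fun n => closedBall (z n) (2 * t n))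
    (fun n => closedBall_subset_closedBall' (by linarith [ht n, hz n]))
    (fun n => nonempty_closedBall.2 (by linarith [dist_nonneg.trans (hz n)]))
    (isCompact_closedBall _ _) (fun _ => isClosed_closedBall)
  exact ⟨x, mem_iInter.1 hx⟩

theorem tendsto_zero_of_le_half {t : ℕ → ℝ} (h0 : ∀ n, 0 ≤ t n) (ht : ∀ n, t (n + 1) ≤ t n / 2) :
    Tendsto t atTop (𝓝 0) := by
  have hle : ∀ n, t n ≤ t 0 * (1 / 2) ^ n := by
    intro n
    induction n with
    | zero => simp
    | succ n ih => rw [pow_succ]; linarith [ht n]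
  refine squeeze_zero h0 hle ?_
  simpa using (tendsto_pow_atTop_nhds_zero_of_lt_one (r := (1 / 2 : ℝ)) (by norm_num)
    (by norm_num)).const_mul (t 0)

theorem exists_succ_lt_le_of_tendsto_zero {t : ℕ → ℝ} (ht : Tendsto t atTop (𝓝 0)) {N : ℕ}
    {σ : ℝ} (hσ : 0 < σ) (hσN : σ ≤ t N) : ∃ r ≥ N, t (r + 1) < σ ∧ σ ≤ t r := by
  have hex : ∃ k, t (N + k + 1) < σ := by
    obtain ⟨n, hn⟩ := eventually_atTop.1 (ht.eventually (gt_mem_nhds hσ))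
    exact ⟨n, hn _ (by omega)⟩
  refine ⟨N + Nat.find hex, by omega, Nat.find_spec hex, ?_⟩
  rcases h : Nat.find hex with _ | k
  · simpa using hσN
  · have := Nat.find_min hex (show k < Nat.find hex by omega)
    simpa [add_assoc] using not_lt.1 this

theorem exists_litLip_eq_top {f : ℝ → ℝ} {z t : ℕ → ℝ} (hpos : ∀ n, 0 < t n)
    (ht : ∀ n, t (n + 1) ≤ t n / 2) (hz : ∀ n, dist (z (n + 1)) (z n) ≤ t n)
    (hS : ∀ n : ℕ, z (n + 1) ∈ steepSet f n (6 * t n)) : ∃ x, litLip f x = ⊤ := by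
  obtain ⟨x, hx⟩ := exists_forall_dist_le_two_mul ht hz
  have h6t : Tendsto (fun n => 6 * t n) atTop (𝓝 0) := by
    simpa using (tendsto_zero_of_le_half (fun n => (hpos n).le) ht).const_mul 6
  refine ⟨x, ENNReal.eq_top_of_forall_nnreal_le fun M => le_liminf_of_le (by isBoundedDefault) ?_⟩
  have hN : (0 : ℝ) < 6 * t (3 * ⌈(M : ℝ)⌉₊) := by linarith [hpos (3 * ⌈(M : ℝ)⌉₊)]
  filter_upwards [Ioo_mem_nhdsGT hN] with σ ⟨hσ, hσN⟩
  obtain ⟨r, hr, hr1, hr2⟩ := exists_succ_lt_le_of_tendsto_zero h6t hσ hσN.le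
  have hxz : 3 * |x - z (r + 1)| ≤ σ := by
    linarith [(Real.dist_eq _ _).symm.trans_le (hx (r + 1))]
  have hMr : (M : ℝ) ≤ r / 3 := by
    have : (3 * ⌈(M : ℝ)⌉₊ : ℝ) ≤ r := by exact_mod_cast hr
    linarith [Nat.le_ceil (M : ℝ)]
  calc (M : ℝ≥0∞) = ENNReal.ofReal M := ENNReal.ofReal_coe_nnreal.symm
    _ ≤ ENNReal.ofReal (r / 3) := ENNReal.ofReal_le_ofReal hMr
    _ ≤ Mf f x σ := ofReal_div_three_le_Mf_of_mem_steepSet r.cast_nonneg (hS r) hσ hr2 hxz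

theorem exists_mem_bigLip_eq_top_of_volume_image_ne_zero {f : ℝ → ℝ} {A : Set ℝ}
    (hlip : ∀ x ∈ A, litLip f x ≠ ⊤) (hA : volume (A \ {x | bigLip f x = ⊤}) = 0)
    (himage : volume (f '' A) ≠ 0) : ∃ z ∈ A, bigLip f z = ⊤ := by
  by_contra! h
  exact himage (volume_image_eq_zero_of_litLip_ne_top hlip
    (measure_mono_null (fun x hx => show x ∈ A \ _ from ⟨hx, h x hx⟩) hA))

theorem exists_seq_of_exists_succ {α : Type*} (P : ℕ → α → Prop) (R : ℕ → α → α → Prop)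
    (h0 : ∃ x, P 0 x) (hstep : ∀ n x, P n x → ∃ y, P (n + 1) y ∧ R n x y) :
    ∃ g : ℕ → α, (∀ n, P n (g n)) ∧ ∀ n, R n (g n) (g (n + 1)) := by
  choose next hnextP hnextR using hstep
  obtain ⟨x₀, hx₀⟩ := h0
  let g : ∀ n, {x // P n x} := fun n =>
    Nat.rec ⟨x₀, hx₀⟩ (fun n x => ⟨next n x.1 x.2, hnextP n x.1 x.2⟩) n
  exact ⟨fun n => (g n).1, fun n => (g n).2, fun n => hnextR n (g n).1 (g n).2⟩

theorem volume_diff_setOf_bigLip_eq_top_ne_zero {f : ℝ → ℝ} (hf : Continuous f)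
    (hlip : ∀ x, litLip f x ≠ ⊤) {U : Set ℝ} (hU : IsOpen U) (hne : U.Nonempty) :
    volume (U \ {x | bigLip f x = ⊤}) ≠ 0 := by
  intro hnull
  let Good (n : ℕ) (p : ℝ × ℝ) : Prop := 0 < p.2 ∧ closedBall p.1 p.2 ⊆ U ∧
    volume (f '' (closedBall p.1 p.2 ∩ steepSet f n (6 * p.2))) ≠ 0
  have hgood : ∀ z ∈ U, bigLip f z = ⊤ → ∀ (n : ℕ) {δ : ℝ}, 0 < δ → ∃ t ≤ δ, Good n (z, t) := by
    intro z hzU hz n δ hδ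
    obtain ⟨ρ, hρ, hρU⟩ := nhds_basis_closedBall.mem_iff.1 (hU.mem_nhds hzU)
    obtain ⟨t, ⟨ht, htle⟩, hvol⟩ :=
      exists_volume_image_inter_steepSet_ne_zero hf hz n (lt_min hδ hρ)
    exact ⟨t, htle.trans (min_le_left _ _), ht,
      (closedBall_subset_closedBall (htle.trans (min_le_right _ _))).trans hρU, hvol⟩
  obtain ⟨z₀, hz₀U, hz₀⟩ : ∃ z ∈ U, bigLip f z = ⊤ := by
    by_contra! h
    exact hU.measure_ne_zero volume hne
      (measure_mono_null (fun x hx => show x ∈ U \ _ from ⟨hx, h x hx⟩) hnull)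
  obtain ⟨t₀, -, ht₀⟩ := hgood z₀ hz₀U hz₀ 0 one_pos
  have hstep : ∀ n p, Good n p → ∃ q, Good (n + 1) q ∧
      dist q.1 p.1 ≤ p.2 ∧ q.1 ∈ steepSet f n (6 * p.2) ∧ q.2 ≤ p.2 / 2 := by
    rintro n ⟨z, t⟩ ⟨ht, hzU, hvol⟩
    obtain ⟨z', ⟨hz'z, hz'S⟩, hz'⟩ := exists_mem_bigLip_eq_top_of_volume_image_ne_zero
      (fun x _ => hlip x) (measure_mono_null (sdiff_subset_sdiff_left (inter_subset_left.trans hzU))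
        hnull) hvol
    obtain ⟨t', ht', hgood'⟩ := hgood z' (hzU hz'z) hz' (n + 1) (half_pos ht)
    exact ⟨(z', t'), by exact_mod_cast hgood', mem_closedBall.1 hz'z, hz'S, ht'⟩
  obtain ⟨p, hp, hpp⟩ := exists_seq_of_exists_succ Good
    (fun n p q => dist q.1 p.1 ≤ p.2 ∧ q.1 ∈ steepSet f n (6 * p.2) ∧ q.2 ≤ p.2 / 2)
    ⟨(z₀, t₀), ht₀⟩ hstep
  obtain ⟨x, hx⟩ := exists_litLip_eq_top (z := fun n => (p n).1) (t := fun n => (p n).2)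
    (fun n => (hp n).1) (fun n => (hpp n).2.2) (fun n => (hpp n).1) (fun n => (hpp n).2.1)
  exact hlip x hx

theorem Lip_infinite_set_isGdelta_and_trim (f : ℝ → ℝ) (hf : Continuous f)
    (hlip : ∀ x : ℝ, litLip f x ≠ ⊤) :
    IsGδ {x : ℝ | bigLip f x = ⊤} ∧ Trim {x : ℝ | bigLip f x = ⊤} := by
  refine ⟨isGδ_setOf_bigLip_eq_top hf, fun a b hab => ?_⟩
  rw [← Real.volume_Ioo, inter_comm,
    ← measure_inter_add_sdiff (Ioo a b) (isGδ_setOf_bigLip_eq_top hf).measurableSet]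
  exact ENNReal.lt_add_right ((measure_mono inter_subset_left).trans_lt measure_Ioo_lt_top).ne
    (volume_diff_setOf_bigLip_eq_top_ne_zero hf hlip isOpen_Ioo (nonempty_Ioo.2 hab))
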